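/- Let E and H be finite-dimensional real inner product spaces and let F : E → H be a smooth map. Define S : E → ℝ by S(x) = ‖F(x)‖² and the first-order functional S_fo : E × H → ℝ by S_fo(x, b) = ‖b‖² + ⟨F(x), b⟩. Then a pair (x, b) ∈ E × H is a critical point of S_fo (i.e., the Fréchet derivative of S_fo vanishes at (x, b)) if and only if b = -(1/2)·F(x) and x is a critical point of S. Consequently the map x ↦ (x, -(1/2)·F(x)) is a bijection from the critical set of S onto the critical set of S_fo, and at such a critical point S_fo(x, -(1/2)·F(x)) = -(1/4)·S(x). -/

import Mathlib

open RealInnerProductSpace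

/-- For smooth `F : E → H` between finite-dimensional real inner product
spaces, with `S x = ‖F x‖²` and `S_fo (x, b) = ‖b‖² + ⟪F x, b⟫`, a pair `(x, b)` is a
critical point of `S_fo` iff `b = -(1/2) • F x` and `x` is a critical point of `S`;
consequently `x ↦ (x, -(1/2) • F x)` is a bijection from `Crit S` onto `Crit S_fo`,
and at such a critical point `S_fo (x, -(1/2) • F x) = -(1/4) * S x`. -/
theorem stmt0 {E H : Type*}
    [NormedAddCommGroup E] [InnerProductSpace ℝ E] [FiniteDimensional ℝ E]
    [NormedAddCommGroup H] [InnerProductSpace ℝ H] [FiniteDimensional ℝ H]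
    (F : E → H) (hF : ContDiff ℝ (⊤ : ℕ∞) F)
    (S : E → ℝ) (hS : ∀ x, S x = ‖F x‖ ^ 2)
    (Sfo : E × H → ℝ) (hSfo : ∀ p : E × H, Sfo p = ‖p.2‖ ^ 2 + ⟪F p.1, p.2⟫) :
    (∀ x : E, ∀ b : H,
      fderiv ℝ Sfo (x, b) = 0 ↔ b = (-(1/2) : ℝ) • F x ∧ fderiv ℝ S x = 0) ∧
    Set.BijOn (fun x : E => (x, (-(1/2) : ℝ) • F x))
      {x : E | fderiv ℝ S x = 0} {p : E × H | fderiv ℝ Sfo p = 0} ∧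
    (∀ x : E, fderiv ℝ S x = 0 →
      Sfo (x, (-(1/2) : ℝ) • F x) = (-(1/4) : ℝ) * S x) := by
  have hFd : ∀ x, HasFDerivAt F (fderiv ℝ F x) x := fun x =>
    (hF.differentiable (by simp) x).hasFDerivAt
  -- derivative of S
  have hSder : ∀ x : E, HasFDerivAt S
      ((fderivInnerCLM ℝ (F x, F x)).comp ((fderiv ℝ F x).prod (fderiv ℝ F x))) x := by
    intro x
    have h := (hFd x).inner ℝ (hFd x)
    have hEq : S = fun y => ⟪F y, F y⟫ := by
      funext y; rw [hS y, real_inner_self_eq_norm_sq]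
    rw [hEq]; exact h
  have hSval : ∀ x : E, ∀ v : E, fderiv ℝ S x v = ⟪F x, fderiv ℝ F x v⟫ + ⟪fderiv ℝ F x v, F x⟫ := by
    intro x v
    rw [(hSder x).fderiv]
    simp [fderivInnerCLM_apply]
  -- criticality of S restated
  have hScrit : ∀ x : E, fderiv ℝ S x = 0 ↔ ∀ v : E, ⟪F x, fderiv ℝ F x v⟫ = 0 := by
    intro x
    constructor
    · intro h v
      have h1 := congrFun (congrArg DFunLike.coe h) v
      rw [hSval x v] at h1
      simp only [ContinuousLinearMap.zero_apply] at h1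
      have h2 : ⟪fderiv ℝ F x v, F x⟫ = ⟪F x, fderiv ℝ F x v⟫ := real_inner_comm _ _
      linarith
    · intro h
      refine ContinuousLinearMap.ext fun v => ?_
      have h2 : ⟪fderiv ℝ F x v, F x⟫ = ⟪F x, fderiv ℝ F x v⟫ := real_inner_comm _ _
      rw [hSval x v, h2, h v]
      simp
  -- derivative of Sfo
  have hSfoder : ∀ x : E, ∀ b : H, HasFDerivAt Sfo
      ((fderivInnerCLM ℝ (b, b)).comp
        ((ContinuousLinearMap.snd ℝ E H).prod (ContinuousLinearMap.snd ℝ E H)) +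
       (fderivInnerCLM ℝ (F x, b)).comp
        (((fderiv ℝ F x).comp (ContinuousLinearMap.fst ℝ E H)).prod
          (ContinuousLinearMap.snd ℝ E H))) (x, b) := by
    intro x b
    have h1 := (hasFDerivAt_snd (p := (x, b))).inner ℝ (hasFDerivAt_snd (p := (x, b)))
    have h2 := (((hFd x).comp (x, b) hasFDerivAt_fst).inner ℝ (hasFDerivAt_snd (p := (x, b))))
    have hEq : Sfo = fun p : E × H => ⟪p.2, p.2⟫ + ⟪F p.1, p.2⟫ := by
      funext p; rw [hSfo p, real_inner_self_eq_norm_sq]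
    rw [hEq]
    exact h1.add h2
  have hSfoval : ∀ x b, ∀ vw : E × H, fderiv ℝ Sfo (x, b) vw =
      (⟪b, vw.2⟫ + ⟪vw.2, b⟫) + (⟪F x, vw.2⟫ + ⟪fderiv ℝ F x vw.1, b⟫) := by
    intro x b vw
    rw [(hSfoder x b).fderiv]
    simp [fderivInnerCLM_apply]
  -- the main iff
  have main : ∀ x : E, ∀ b : H,
      fderiv ℝ Sfo (x, b) = 0 ↔ b = (-(1/2) : ℝ) • F x ∧ fderiv ℝ S x = 0 := by
    intro x b
    constructor
    · intro h
      have happ : ∀ vw : E × H,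
          (⟪b, vw.2⟫ + ⟪vw.2, b⟫) + (⟪F x, vw.2⟫ + ⟪fderiv ℝ F x vw.1, b⟫) = 0 := by
        intro vw
        rw [← hSfoval x b vw, h]; rfl
      have hb : b = (-(1/2) : ℝ) • F x := by
        have hw : ∀ w : H, ⟪(2:ℝ) • b + F x, w⟫ = 0 := by
          intro w
          have h1 := happ (0, w)
          simp only [map_zero, inner_zero_left, add_zero] at h1
          have h2 : ⟪w, b⟫ = ⟪b, w⟫ := real_inner_comm _ _
          rw [inner_add_left, real_inner_smul_left]
          linarith
        have h0 : (2:ℝ) • b + F x = 0 :=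
          inner_self_eq_zero.mp (hw ((2:ℝ) • b + F x))
        have h1 : (2:ℝ) • b = -F x := eq_neg_of_add_eq_zero_left h0
        calc b = (1/2:ℝ) • ((2:ℝ) • b) := by rw [smul_smul]; norm_num
          _ = (1/2:ℝ) • (-F x) := by rw [h1]
          _ = (-(1/2) : ℝ) • F x := by rw [smul_neg, ← neg_smul]
      refine ⟨hb, (hScrit x).mpr ?_⟩
      intro v
      have h1 := happ (v, 0)
      simp only [inner_zero_left, inner_zero_right, zero_add, add_zero] at h1
      rw [hb, real_inner_smul_right] at h1
      have h2 : ⟪fderiv ℝ F x v, F x⟫ = 0 := by linarith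
      rw [real_inner_comm]; exact h2
    · rintro ⟨hb, hcrit⟩
      have hc := (hScrit x).mp hcrit
      refine ContinuousLinearMap.ext fun vw => ?_
      rw [hSfoval x b vw, hb]
      have h1 : ⟪fderiv ℝ F x vw.1, (-(1/2) : ℝ) • F x⟫ = 0 := by
        rw [real_inner_smul_right, real_inner_comm, hc vw.1]; ring
      rw [h1, real_inner_smul_left, real_inner_smul_right, real_inner_comm vw.2 (F x)]
      simp; ring
  refine ⟨main, ⟨?_, ?_, ?_⟩, ?_⟩
  · intro x hx
    exact (main x _).mpr ⟨rfl, hx⟩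
  · intro x _ y _ hxy
    exact (Prod.mk.injEq _ _ _ _).mp hxy |>.1
  · intro p hp
    obtain ⟨hb, hcrit⟩ := (main p.1 p.2).mp hp
    refine ⟨p.1, hcrit, ?_⟩
    show (p.1, (-(1/2) : ℝ) • F p.1) = p
    rw [← hb]
  · intro x _
    rw [hSfo, hS]
    simp only
    rw [norm_smul, real_inner_smul_right, real_inner_self_eq_norm_sq]
    simp [mul_pow]
    ring
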